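/- Every iterate of the Bellman backup of a pointwise minimum of finitely many linear functions is again a pointwise minimum of finitely many linear functions: define the operator H on functions w : (I → ℝ) → ℝ by (H w)(p) = min_{a ∈ A} ( ∑_i (c a) i · p i + β · ∑_{z ∈ Z} w( (M a z)ᵀ.mulVec p ) ). Then for every finite nonempty set Γ of vectors in I → ℝ and every n ∈ ℕ, there exists a finite nonempty set Γ_n of vectors in I → ℝ such that H^[n] (v_Γ) = v_{Γ_n}. -/

import Mathlib

/-!
The backup of `v_Γ` is again of the form `v_Γ'`. For a fixed action `a`, the term
`v_Γ((M a z)ᵀ p)` is the minimum over `γ ∈ Γ` of the linear functions `p ↦ (M a z γ) ⬝ p`; a sum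
over `z` of such minima is the minimum over all choices `σ : Z → Γ` of the summed linear functions,
and since `β ≥ 0` both adding `c a ⬝ p` and scaling by `β` commute with the minimum. Taking the
minimum over `a` as well gives `Γ' = {c a + β ∑_z M a z (σ z) | a ∈ A, σ : Z → Γ}`, and the theorem
follows by induction on `n`.
-/

open Matrix Finset

theorem Finset.sum_inf'_eq_inf'_piFinset {Z ι M : Type*} [Fintype Z] [DecidableEq Z]
    [AddCommMonoid M] [LinearOrder M] [IsOrderedAddMonoid M]
    {s : Z → Finset ι} (hs : ∀ z, (s z).Nonempty) (g : Z → ι → M) :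
    ∑ z, (s z).inf' (hs z) (g z) =
      (Fintype.piFinset s).inf' (Fintype.piFinset_nonempty.2 hs) fun σ => ∑ z, g z (σ z) := by
  refine le_antisymm (le_inf' _ _ fun σ hσ => sum_le_sum fun z _ =>
    inf'_le _ (Fintype.mem_piFinset.1 hσ z)) ?_
  choose σ hσ_mem hσ_eq using fun z => exists_mem_eq_inf' (hs z) (g z)
  calc ∑ z, (s z).inf' (hs z) (g z) = ∑ z, g z (σ z) := sum_congr rfl fun z _ => hσ_eq z
    _ ≥ _ := inf'_le _ (Fintype.mem_piFinset.2 hσ_mem)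

section Backup

variable {I A Z : Type*} [Fintype I] [Fintype Z]

/-- The function `v_Γ` of the statement. -/
noncomputable def minLinear (Γ : Finset (I → ℝ)) (hΓ : Γ.Nonempty) (p : I → ℝ) : ℝ :=
  Γ.inf' hΓ (· ⬝ᵥ p)

theorem minLinear_transpose_mulVec {Γ : Finset (I → ℝ)} (hΓ : Γ.Nonempty) (N : Matrix I I ℝ)
    (p : I → ℝ) : minLinear Γ hΓ (Nᵀ *ᵥ p) = Γ.inf' hΓ fun γ => (N *ᵥ γ) ⬝ᵥ p := by
  simp only [minLinear, dotProduct_mulVec, vecMul_transpose]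

def backupVec (β : ℝ) (c : A → I → ℝ) (M : A → Z → Matrix I I ℝ) (a : A) (σ : Z → I → ℝ) :
    I → ℝ :=
  c a + β • ∑ z, M a z *ᵥ σ z

open Classical in
noncomputable def backupSet [Fintype A] (β : ℝ) (c : A → I → ℝ) (M : A → Z → Matrix I I ℝ)
    (Γ : Finset (I → ℝ)) : Finset (I → ℝ) :=
  (univ ×ˢ Fintype.piFinset fun _ : Z => Γ).image fun q => backupVec β c M q.1 q.2

theorem backupSet_nonempty [Fintype A] [Nonempty A] (β : ℝ) (c : A → I → ℝ)
    (M : A → Z → Matrix I I ℝ) {Γ : Finset (I → ℝ)} (hΓ : Γ.Nonempty) :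
    (backupSet β c M Γ).Nonempty := by
  classical exact (univ_nonempty.product (Fintype.piFinset_nonempty.2 fun _ => hΓ)).image _

variable {β : ℝ} (hβ : 0 ≤ β) (c : A → I → ℝ) (M : A → Z → Matrix I I ℝ)
  {Γ : Finset (I → ℝ)} (hΓ : Γ.Nonempty)
include hβ

theorem backup_action_minLinear [DecidableEq Z] (a : A) (p : I → ℝ) :
    c a ⬝ᵥ p + β * ∑ z, minLinear Γ hΓ ((M a z)ᵀ *ᵥ p) =
      (Fintype.piFinset fun _ : Z => Γ).inf' (Fintype.piFinset_nonempty.2 fun _ => hΓ)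
        fun σ => backupVec β c M a σ ⬝ᵥ p := by
  have hmono : Monotone fun x => c a ⬝ᵥ p + β * x := fun _ _ hxy => by
    dsimp only
    gcongr
  simp only [minLinear_transpose_mulVec, sum_inf'_eq_inf'_piFinset (fun _ => hΓ)]
  rw [apply_inf'_eq_inf'_comp _ (fun x => c a ⬝ᵥ p + β * x) fun _ _ => hmono.map_min]
  refine inf'_congr _ rfl fun σ _ => ?_
  simp only [Function.comp_apply, backupVec, add_dotProduct, smul_dotProduct, sum_dotProduct,
    smul_eq_mul]

theorem inf'_backup_minLinear [Fintype A] [Nonempty A] (p : I → ℝ) :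
    univ.inf' univ_nonempty (fun a => c a ⬝ᵥ p + β * ∑ z, minLinear Γ hΓ ((M a z)ᵀ *ᵥ p)) =
      minLinear (backupSet β c M Γ) (backupSet_nonempty β c M hΓ) p := by
  classical
  simp only [backup_action_minLinear hβ c M hΓ]
  simp only [minLinear, backupSet, inf'_image, inf'_product_left, Function.comp_def]

end Backup

theorem bellman_backup_iterates_piecewise_linear_general
    {I A Z : Type*} [Fintype I] [Fintype A] [Nonempty A]
    [Fintype Z]
    (β : ℝ) (hβ0 : 0 ≤ β)
    (c : A → I → ℝ) (M : A → Z → Matrix I I ℝ)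
    (H : ((I → ℝ) → ℝ) → ((I → ℝ) → ℝ))
    (hH : ∀ w p, H w p = Finset.univ.inf' Finset.univ_nonempty
          (fun a : A => ∑ i, c a i * p i + β * ∑ z, w ((M a z)ᵀ.mulVec p))) :
    ∀ (Γ : Finset (I → ℝ)) (hΓ : Γ.Nonempty) (n : ℕ),
      ∃ (Γₙ : Finset (I → ℝ)) (hΓₙ : Γₙ.Nonempty),
        H^[n] (fun p => Γ.inf' hΓ fun γ => ∑ i, γ i * p i) =
          fun p => Γₙ.inf' hΓₙ fun γ => ∑ i, γ i * p i := by
  intro Γ hΓ n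
  induction n with
  | zero => exact ⟨Γ, hΓ, rfl⟩
  | succ n ih =>
    obtain ⟨Γₙ, hΓₙ, hΓₙ_eq⟩ := ih
    refine ⟨backupSet β c M Γₙ, backupSet_nonempty β c M hΓₙ, ?_⟩
    rw [Function.iterate_succ_apply', hΓₙ_eq]
    funext p
    rw [hH]
    exact inf'_backup_minLinear hβ0 c M hΓₙ p

/-- Every iterate of the POMDP Bellman backup of a pointwise minimum of finitely many
linear functions is again a pointwise minimum of finitely many linear functions. -/
theorem bellman_backup_iterates_piecewise_linear
    {I A Z : Type*} [Fintype I] [Nonempty I] [Fintype A] [Nonempty A]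
    [Fintype Z] [Nonempty Z]
    (β : ℝ) (hβ0 : 0 ≤ β) (hβ1 : β < 1)
    (c : A → I → ℝ) (M : A → Z → Matrix I I ℝ)
    (hM0 : ∀ a z i j, 0 ≤ M a z i j)
    (hM1 : ∀ a i, ∑ z, ∑ j, M a z i j = 1)
    (H : ((I → ℝ) → ℝ) → ((I → ℝ) → ℝ))
    (hH : ∀ w p, H w p = Finset.univ.inf' Finset.univ_nonempty
          (fun a : A => ∑ i, c a i * p i + β * ∑ z, w ((M a z)ᵀ.mulVec p))) :
    ∀ (Γ : Finset (I → ℝ)) (hΓ : Γ.Nonempty) (n : ℕ),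
      ∃ (Γₙ : Finset (I → ℝ)) (hΓₙ : Γₙ.Nonempty),
        H^[n] (fun p => Γ.inf' hΓ fun γ => ∑ i, γ i * p i) =
          fun p => Γₙ.inf' hΓₙ fun γ => ∑ i, γ i * p i :=
  bellman_backup_iterates_piecewise_linear_general β hβ0 c M H hH
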